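/- Let f(y) = (1 − cos(h·log y))/y with 0 ≤ h ≤ 1. Then |∫_2^∞ (ϑ(y) − y) · d/dy [f(y)/log y] dy| ≤ (3/2)·∫_2^∞ (2 + 3·log y)/(y·(log y)^3) dy < 9.62, assuming |ϑ(y) − y| ≤ 3y/(2 log y) for all y ≥ 2, where ϑ is the Chebyshev function ϑ(y) = Σ_{p ≤ y} log p. -/

import Mathlib

open Real MeasureTheory

noncomputable def chebTheta (y : ℝ) : ℝ :=
  ∑ p ∈ (Finset.range (Nat.floor y + 1)).filter Nat.Prime, Real.log p

/-! Differentiating, `d/dy [(1 - cos (h log y)) / (y log y)]` has numerator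
`log y * (h sin (h log y) - (1 - cos (h log y))) - (1 - cos (h log y))` over `y² log² y`,
which is at most `2 + 3 log y` in absolute value when `|h| ≤ 1`. With the hypothesis on `ϑ` the
integrand is thus dominated by `(3/2) (2 + 3 log y) / (y log³ y)`, the derivative of
`-(log y)⁻² - 3 (log y)⁻¹`, so its integral over `(2, ∞)` is `(1 + 3 log 2) / log² 2`. -/

theorem hasDerivAt_neg_inv_log_sq_sub_three_mul_inv_log {y : ℝ} (hy : 1 < y) :
    HasDerivAt (fun y => -(Real.log y ^ 2)⁻¹ - 3 * (Real.log y)⁻¹)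
      ((2 + 3 * Real.log y) / (y * Real.log y ^ 3)) y := by
  have hy0 : y ≠ 0 := by positivity
  have hL : Real.log y ≠ 0 := (Real.log_pos hy).ne'
  have hlog := Real.hasDerivAt_log hy0
  refine (((hlog.pow 2).inv (pow_ne_zero 2 hL)).neg.sub ((hlog.inv hL).const_mul 3)).congr_deriv ?_
  simp only [Pi.pow_apply]
  field_simp
  ring

theorem tendsto_neg_inv_log_sq_sub_three_mul_inv_log_atTop :
    Filter.Tendsto (fun y => -(Real.log y ^ 2)⁻¹ - 3 * (Real.log y)⁻¹) Filter.atTop (nhds 0) := by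
  have hinv := Real.tendsto_log_atTop.inv_tendsto_atTop
  simpa [inv_pow] using (hinv.pow 2).neg.sub (hinv.const_mul 3)

theorem two_add_three_mul_log_div_nonneg {y : ℝ} (hy : 1 < y) :
    0 ≤ (2 + 3 * Real.log y) / (y * Real.log y ^ 3) := by
  have := Real.log_pos hy
  positivity

theorem integrableOn_Ioi_two_add_three_mul_log_div {a : ℝ} (ha : 1 < a) :
    IntegrableOn (fun y => (2 + 3 * Real.log y) / (y * Real.log y ^ 3)) (Set.Ioi a) :=
  integrableOn_Ioi_deriv_of_nonneg'
    (fun _ hy => hasDerivAt_neg_inv_log_sq_sub_three_mul_inv_log (ha.trans_le hy))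
    (fun _ hy => two_add_three_mul_log_div_nonneg (ha.trans hy))
    tendsto_neg_inv_log_sq_sub_three_mul_inv_log_atTop

theorem integral_Ioi_two_add_three_mul_log_div {a : ℝ} (ha : 1 < a) :
    ∫ y in Set.Ioi a, (2 + 3 * Real.log y) / (y * Real.log y ^ 3) =
      (1 + 3 * Real.log a) / Real.log a ^ 2 := by
  rw [integral_Ioi_of_hasDerivAt_of_nonneg'
    (fun _ hy => hasDerivAt_neg_inv_log_sq_sub_three_mul_inv_log (ha.trans_le hy))
    (fun _ hy => two_add_three_mul_log_div_nonneg (ha.trans hy))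
    tendsto_neg_inv_log_sq_sub_three_mul_inv_log_atTop]
  have := (Real.log_pos ha).ne'
  field_simp
  ring

theorem hasDerivAt_one_sub_cos_mul_log_div_div_log (h : ℝ) {y : ℝ} (hy0 : y ≠ 0)
    (hL : Real.log y ≠ 0) :
    HasDerivAt (fun y => (1 - Real.cos (h * Real.log y)) / y / Real.log y)
      ((Real.log y * (h * Real.sin (h * Real.log y) - (1 - Real.cos (h * Real.log y))) -
        (1 - Real.cos (h * Real.log y))) / (y ^ 2 * Real.log y ^ 2)) y := by
  have hlog := Real.hasDerivAt_log hy0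
  have hcos := (Real.hasDerivAt_cos (h * Real.log y)).comp y (hlog.const_mul h)
  refine (((hcos.const_sub 1).div (hasDerivAt_id' y) hy0).div hlog hL).congr_deriv ?_
  simp only [Function.comp_apply, Pi.div_apply]
  field_simp

theorem abs_deriv_one_sub_cos_mul_log_div_div_log_le {h : ℝ} (hh : |h| ≤ 1) {y : ℝ}
    (hy : 1 < y) :
    |deriv (fun y => (1 - Real.cos (h * Real.log y)) / y / Real.log y) y| ≤
      (2 + 3 * Real.log y) / (y ^ 2 * Real.log y ^ 2) := by
  have hy0 : 0 < y := by linarith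
  have hL := Real.log_pos hy
  rw [(hasDerivAt_one_sub_cos_mul_log_div_div_log h hy0.ne' hL.ne').deriv, abs_div,
    abs_of_pos (mul_pos (pow_pos hy0 2) (pow_pos hL 2))]
  refine div_le_div_of_nonneg_right ?_ (by positivity)
  set L := Real.log y
  set s := Real.sin (h * L)
  set c := 1 - Real.cos (h * L)
  have hhs : |h * s| ≤ 1 := by
    rw [abs_mul]
    exact mul_le_one₀ hh (abs_nonneg _) (Real.abs_sin_le_one _)
  have hc0 : 0 ≤ c := sub_nonneg.mpr (Real.cos_le_one _)
  have hc2 : c ≤ 2 := by linarith [Real.neg_one_le_cos (h * L)]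
  obtain ⟨hhs₁, hhs₂⟩ := abs_le.mp hhs
  rw [abs_le]
  constructor <;> nlinarith

theorem three_halves_mul_one_add_three_mul_log_two_div_lt :
    3 / 2 * ((1 + 3 * Real.log 2) / Real.log 2 ^ 2) < 9.62 := by
  have hlog2 := Real.log_two_gt_d9
  rw [mul_div_assoc', div_lt_iff₀ (by positivity)]
  nlinarith

theorem theta_error_integral_bound (h : ℝ) (h0 : 0 ≤ h) (h1 : h ≤ 1)
    (htheta : ∀ y : ℝ, 2 ≤ y → |chebTheta y - y| ≤ 3 * y / (2 * Real.log y)) :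
    |∫ y in Set.Ioi (2:ℝ), (chebTheta y - y) *
        deriv (fun y : ℝ => (1 - Real.cos (h * Real.log y)) / y / Real.log y) y| ≤
      (3/2) * ∫ y in Set.Ioi (2:ℝ), (2 + 3 * Real.log y) / (y * (Real.log y) ^ 3) ∧
    (3/2) * (∫ y in Set.Ioi (2:ℝ), (2 + 3 * Real.log y) / (y * (Real.log y) ^ 3)) < 9.62 := by
  have hh : |h| ≤ 1 := abs_le.mpr ⟨by linarith, h1⟩
  refine ⟨?_, ?_⟩
  · rw [← integral_const_mul, ← Real.norm_eq_abs]
    refine norm_integral_le_of_norm_le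
      ((integrableOn_Ioi_two_add_three_mul_log_div one_lt_two).const_mul (3 / 2)) ?_
    filter_upwards [ae_restrict_mem measurableSet_Ioi] with y (hy : 2 < y)
    have hL := Real.log_pos (one_lt_two.trans hy)
    calc ‖(chebTheta y - y) *
          deriv (fun y => (1 - Real.cos (h * Real.log y)) / y / Real.log y) y‖
        ≤ 3 * y / (2 * Real.log y) * ((2 + 3 * Real.log y) / (y ^ 2 * Real.log y ^ 2)) := by
          rw [Real.norm_eq_abs, abs_mul]
          exact mul_le_mul (htheta y hy.le)
            (abs_deriv_one_sub_cos_mul_log_div_div_log_le hh (one_lt_two.trans hy))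
            (abs_nonneg _) (by positivity)
      _ = 3 / 2 * ((2 + 3 * Real.log y) / (y * Real.log y ^ 3)) := by
          field_simp
  · rw [integral_Ioi_two_add_three_mul_log_div one_lt_two]
    exact three_halves_mul_one_add_three_mul_log_two_div_lt
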